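/- arXiv:2504.01784 — 2 statements merged into one kernel-verified Lean document; each statement's English description precedes it below -/
import Mathlib

section
/- Let σ > 0, 0 < k_min < k_max, b = (2σ k_min k_max − 1)/(σ(k_min + k_max)), and α* = −b + √(b² + 2/σ). Define ρ̃(α, k) = (2/σ)·((1 − ασk)/(α + 2k))². Then ρ̃(α*, k_min) = ρ̃(α*, k_max). -/
/-! The optimal parameter α* is the positive root of `α² + 2bα = 2/σ`. With the chosen `b`, this
quadratic says exactly that `(1 - ασk)/(α + 2k)` takes opposite values at `k_min` and `k_max`,
so its square, the reduction factor, takes equal values there. -/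

namespace Real

theorem neg_add_sqrt_sq_add_pos {b c : ℝ} (hc : 0 < c) : 0 < -b + √(b ^ 2 + c) := by
  have h : |b| < √(b ^ 2 + c) := by
    rw [← sqrt_sq_eq_abs]
    exact sqrt_lt_sqrt (sq_nonneg b) (by linarith)
  linarith [le_abs_self b]

theorem neg_add_sqrt_sq_add_isRoot {b c : ℝ} (hc : 0 ≤ b ^ 2 + c) :
    (-b + √(b ^ 2 + c)) ^ 2 + 2 * b * (-b + √(b ^ 2 + c)) = c := by
  linear_combination sq_sqrt hc

end Real

theorem robin_cross_sum_eq_zero {σ k₁ k₂ α : ℝ} (hσ : σ ≠ 0) (hk : k₁ + k₂ ≠ 0)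
    (hα : α ^ 2 + 2 * ((2 * σ * k₁ * k₂ - 1) / (σ * (k₁ + k₂))) * α = 2 / σ) :
    (1 - α * σ * k₁) * (α + 2 * k₂) + (1 - α * σ * k₂) * (α + 2 * k₁) = 0 := by
  field_simp at hα
  linear_combination -hα

theorem robin_ratio_eq_neg {σ k₁ k₂ α : ℝ} (h₁ : α + 2 * k₁ ≠ 0) (h₂ : α + 2 * k₂ ≠ 0)
    (hcross : (1 - α * σ * k₁) * (α + 2 * k₂) + (1 - α * σ * k₂) * (α + 2 * k₁) = 0) :
    (1 - α * σ * k₁) / (α + 2 * k₁) = -((1 - α * σ * k₂) / (α + 2 * k₂)) := by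
  rw [← neg_div, div_eq_div_iff h₁ h₂]
  linear_combination hcross

theorem stmt_5 (σ : ℝ) (hσ : 0 < σ)
    (kmin kmax : ℝ) (hk : 0 < kmin) (hkk : kmin < kmax)
    (b α : ℝ)
    (hb : b = (2 * σ * kmin * kmax - 1) / (σ * (kmin + kmax)))
    (hα : α = -b + Real.sqrt (b ^ 2 + 2 / σ))
    (ρ : ℝ → ℝ → ℝ)
    (hρ : ∀ a k, ρ a k = (2 / σ) * ((1 - a * σ * k) / (a + 2 * k)) ^ 2) :
    ρ α kmin = ρ α kmax := by
  have hα_pos : 0 < α := hα ▸ Real.neg_add_sqrt_sq_add_pos (by positivity)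
  have hroot : α ^ 2 + 2 * b * α = 2 / σ :=
    hα ▸ Real.neg_add_sqrt_sq_add_isRoot (by positivity)
  have hcross := robin_cross_sum_eq_zero (k₁ := kmin) (k₂ := kmax) hσ.ne' (by linarith)
    (hb ▸ hroot)
  rw [hρ, hρ, robin_ratio_eq_neg (by linarith) (by linarith) hcross, neg_sq]
end

section
/- Let σ > 0, 0 < k_min < k_max, b = (2σ k_min k_max − 1)/(σ(k_min+k_max)), α* = −b + √(b² + 2/σ), and ρ̃(α,k) = (2/σ)((1−ασk)/(α+2k))². Then for every k ∈ [k_min, k_max], ρ̃(α*, k) ≤ max(ρ̃(α*, k_min), ρ̃(α*, k_max)), i.e., the maximum of ρ̃(α*, ·) over [k_min, k_max] is attained at an endpoint. -/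
theorem stmt_14 (σ : ℝ) (hσ : 0 < σ)
    (kmin kmax : ℝ) (hk : 0 < kmin) (hkk : kmin < kmax)
    (b α : ℝ)
    (hb : b = (2 * σ * kmin * kmax - 1) / (σ * (kmin + kmax)))
    (hα : α = -b + Real.sqrt (b ^ 2 + 2 / σ))
    (ρ : ℝ → ℝ → ℝ)
    (hρ : ∀ a k, ρ a k = (2 / σ) * ((1 - a * σ * k) / (a + 2 * k)) ^ 2) :
    ∀ k ∈ Set.Icc kmin kmax, ρ α k ≤ max (ρ α kmin) (ρ α kmax) := by
  -- α > 0
  have harg : (0:ℝ) < b ^ 2 + 2 / σ := by positivity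
  have hsb : |b| < Real.sqrt (b ^ 2 + 2 / σ) := by
    rw [show |b| = Real.sqrt (b ^ 2) by rw [Real.sqrt_sq_eq_abs]]
    apply Real.sqrt_lt_sqrt (by positivity)
    have : (0:ℝ) < 2 / σ := by positivity
    linarith
  have hα0 : 0 < α := by
    have := neg_abs_le b
    have := le_abs_self b
    rw [hα]; linarith
  intro k hkmem
  obtain ⟨hk1, hk2⟩ := hkmem
  have hd : 0 < α + 2 * k := by linarith
  have hdmin : 0 < α + 2 * kmin := by linarith
  have hdmax : 0 < α + 2 * kmax := by linarith
  set A := (1 - α * σ * kmax) / (α + 2 * kmax) with hA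
  set B := (1 - α * σ * kmin) / (α + 2 * kmin) with hB
  set x := (1 - α * σ * k) / (α + 2 * k) with hx
  have hmono : ∀ k1 k2 : ℝ, 0 < α + 2 * k1 → 0 < α + 2 * k2 → k1 ≤ k2 →
      (1 - α * σ * k2) / (α + 2 * k2) ≤ (1 - α * σ * k1) / (α + 2 * k1) := by
    intro k1 k2 h1 h2 hle
    rw [div_le_div_iff₀ h2 h1]
    nlinarith [mul_nonneg (mul_nonneg hσ.le (sq_nonneg α)) (by linarith : (0:ℝ) ≤ k2 - k1)]
  have hAx : A ≤ x := hmono k kmax hd hdmax hk2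
  have hxB : x ≤ B := hmono kmin k hdmin hd hk1
  have hsq : x ^ 2 ≤ max (B ^ 2) (A ^ 2) := by
    rcases le_or_gt 0 x with h | h
    · exact le_max_of_le_left (by nlinarith)
    · exact le_max_of_le_right (by nlinarith)
  rw [hρ, hρ, hρ]
  have h2σ : (0:ℝ) ≤ 2 / σ := by positivity
  rcases max_cases (B ^ 2) (A ^ 2) with ⟨he, _⟩ | ⟨he, _⟩
  · exact le_max_of_le_left (by rw [← hB]; nlinarith [he ▸ hsq])
  · exact le_max_of_le_right (by rw [← hA]; nlinarith [he ▸ hsq])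
end
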